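/- arXiv:1104.1668 — 3 statements merged into one kernel-verified Lean document; each statement's English description precedes it below -/
import Mathlib

section
/- Given g ∈ F (a function ℤ → {×, ∘} with finitely many ×'s) and a ∈ ℤ, there is at most one f ∈ F such that g is obtained from f by a legal move of weight zero starting at a. -/
/-! A weight-zero legal move `f ↦ g = f^a_b` leaves a cap from `b` to `a` in the cap diagram
of `g`, and a cap is determined by its right end. So `b` is determined by `g` and `a`, and
`f = g^b_a` is recovered by the reverse swap. -/

namespace KacComb

/-- Core-free diagrams: functions from `ℤ` to `{×, ∘}`, with `true` = `×`. -/
abbrev F : Type := ℤ → Bool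

/-- `tally f b c` = number of `×`'s minus number of `∘`'s of `f` strictly between `b` and `c`. -/
noncomputable def tally (f : F) (b c : ℤ) : ℤ :=
  (((Finset.Ioo b c).filter fun x => f x = true).card : ℤ) -
    (((Finset.Ioo b c).filter fun x => f x = false).card : ℤ)

/-- `move f a b` = `f^a_b`: replace the `×` at `a` by `∘` and the `∘` at `b` by `×`. -/
def move (f : F) (a b : ℤ) : F :=
  Function.update (Function.update f a false) b true

/-- The move `f ↦ f^a_b` (start `a`, end `b`) is legal. -/
def IsLegal (f : F) (a b : ℤ) : Prop :=
  b < a ∧ f a = true ∧ f b = false ∧ ∀ c : ℤ, b < c → c ≤ a → 0 ≤ tally f b c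

/-- `g` is obtained from `f` by a legal move with start `a` and end `b`. -/
def LegalMove (f g : F) (a b : ℤ) : Prop :=
  IsLegal f a b ∧ g = move f a b

/-- The cap diagram of `g` has a cap beginning at `b` and ending at `a`. -/
def HasCap (g : F) (b a : ℤ) : Prop :=
  b < a ∧ g b = true ∧ g a = false ∧ tally g b a = 0 ∧
    ∀ c : ℤ, b < c → c ≤ a → 0 ≤ tally g b c

/-- The cap diagram of `g` matches the weight diagram of `f`. -/
def Matches (g f : F) : Prop :=
  (∀ b a : ℤ, HasCap g b a →
      (f b = true ∧ f a = false) ∨ (f b = false ∧ f a = true)) ∧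
  ∀ x : ℤ, f x = true → ∃ b a : ℤ, HasCap g b a ∧ (x = b ∨ x = a)

/-- `P(f)`: the set of `g` whose cap diagram matches the weight diagram of `f`. -/
def Pset (f : F) : Set F := {g | Matches g f}

lemma tally_eq_sum (f : F) (b c : ℤ) :
    tally f b c = ∑ x ∈ Finset.Ioo b c, if f x = true then (1 : ℤ) else -1 := by
  have hfalse : ((Finset.Ioo b c).filter fun x => f x = false) =
      (Finset.Ioo b c).filter fun x => ¬ f x = true :=
    Finset.filter_congr fun x _ => by simp
  rw [tally, hfalse, Finset.sum_ite, Finset.sum_const, Finset.sum_const, nsmul_eq_mul,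
    nsmul_eq_mul]
  ring

lemma tally_split (f : F) {b m c : ℤ} (hbm : b < m) (hmc : m < c) :
    tally f b c = tally f b m + (if f m = true then 1 else -1) + tally f m c := by
  have hIoo : Finset.Ioo b c = Finset.Ioo b m ∪ insert m (Finset.Ioo m c) := by
    ext x
    simp only [Finset.mem_union, Finset.mem_insert, Finset.mem_Ioo]
    omega
  have hdisj : Disjoint (Finset.Ioo b m) (insert m (Finset.Ioo m c)) := by
    simp only [Finset.disjoint_left, Finset.mem_insert, Finset.mem_Ioo]
    omega
  rw [tally_eq_sum, tally_eq_sum, tally_eq_sum, hIoo, Finset.sum_union hdisj,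
    Finset.sum_insert (by simp)]
  ring

lemma tally_congr {f g : F} {b c : ℤ} (h : ∀ x ∈ Finset.Ioo b c, f x = g x) :
    tally f b c = tally g b c := by
  rw [tally_eq_sum, tally_eq_sum]
  exact Finset.sum_congr rfl fun x hx => by rw [h x hx]

lemma move_apply_of_ne (f : F) {a b x : ℤ} (hxa : x ≠ a) (hxb : x ≠ b) :
    move f a b x = f x := by
  simp [move, hxa, hxb]

lemma move_move (f : F) {a b : ℤ} (hba : b ≠ a) (hfa : f a = true) (hfb : f b = false) :
    move (move f a b) b a = f := by
  funext x
  by_cases hxa : x = a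
  · simp [move, hxa, hfa]
  by_cases hxb : x = b
  · simp [move, hxb, hba, hfb]
  simp [move, hxa, hxb]

lemma LegalMove.eq_move {f g : F} {a b : ℤ} (h : LegalMove f g a b) : f = move g b a := by
  obtain ⟨⟨hba, hfa, hfb, -⟩, rfl⟩ := h
  exact (move_move f hba.ne hfa hfb).symm

lemma LegalMove.hasCap {f g : F} {a b : ℤ} (h : LegalMove f g a b) (hw : tally f b a = 0) :
    HasCap g b a := by
  obtain ⟨⟨hba, -, -, hlegal⟩, rfl⟩ := h
  have htally : ∀ c, c ≤ a → tally (move f a b) b c = tally f b c := fun c hca =>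
    tally_congr fun x hx => by
      rw [Finset.mem_Ioo] at hx
      exact move_apply_of_ne f (by omega) (by omega)
  refine ⟨hba, by simp [move], by simp [move, hba.ne'], ?_, fun c hbc hca => ?_⟩
  · rw [htally a le_rfl, hw]
  · rw [htally c hca]
    exact hlegal c hbc hca

/-- If `b₁ < b₂` both began caps ending at `a`, splitting the tally at the `×` in `b₂` would
give `0 = tally g b₁ b₂ + 1 + 0`, contradicting `0 ≤ tally g b₁ b₂`. -/
lemma HasCap.left_unique {g : F} {a b₁ b₂ : ℤ} (h₁ : HasCap g b₁ a) (h₂ : HasCap g b₂ a) :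
    b₁ = b₂ := by
  wlog hle : b₁ ≤ b₂ generalizing b₁ b₂
  · exact (this h₂ h₁ (le_of_not_ge hle)).symm
  obtain ⟨hb₁a, -, -, ht₁, hl₁⟩ := h₁
  obtain ⟨hb₂a, hgb₂, -, ht₂, -⟩ := h₂
  by_contra hne
  have hlt : b₁ < b₂ := lt_of_le_of_ne hle hne
  have hsplit := tally_split g hlt hb₂a
  rw [ht₁, ht₂, hgb₂, if_pos rfl] at hsplit
  have hnonneg := hl₁ b₂ hlt hb₂a.le
  omega

theorem stmt5_general (g : F) (a : ℤ)
    (f₁ f₂ : F) (b₁ b₂ : ℤ)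
    (h₁ : LegalMove f₁ g a b₁) (hw₁ : tally f₁ b₁ a = 0)
    (h₂ : LegalMove f₂ g a b₂) (hw₂ : tally f₂ b₂ a = 0) :
    f₁ = f₂ := by
  have hb : b₁ = b₂ := (h₁.hasCap hw₁).left_unique (h₂.hasCap hw₂)
  subst hb
  rw [h₁.eq_move, h₂.eq_move]

/-- given `g` and `a`, there is at most one `f` such that `g` is obtained
from `f` by a legal move of weight zero starting at `a`. -/
theorem stmt5 (g : F) (hg : {x : ℤ | g x = true}.Finite) (a : ℤ)
    (f₁ f₂ : F) (b₁ b₂ : ℤ)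
    (h₁ : LegalMove f₁ g a b₁) (hw₁ : tally f₁ b₁ a = 0)
    (h₂ : LegalMove f₂ g a b₂) (hw₂ : tally f₂ b₂ a = 0) :
    f₁ = f₂ :=
  stmt5_general g a f₁ f₂ b₁ b₂ h₁ hw₁ h₂ hw₂

end KacComb
end

section
/- For f ∈ F with f(a) = × and f(a−1) = ×, let h = f^a (delete the × at a, replacing it by ∘). Then there is no legal move from f of weight 0 starting at a, and for each i > 0, the set of b with f^a_b a legal move of weight i from f equals the set of b with h^{a−1}_b a legal move of weight i−1 from h. -/
namespace KacComb

lemma tally_update_of_le (f : F) {a c : ℤ} (v : Bool) (b : ℤ) (hc : c ≤ a) :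
    tally (Function.update f a v) b c = tally f b c :=
  tally_congr fun x hx => Function.update_of_ne (by grind) _ _

lemma tally_eq_tally_sub_one_add_one {f : F} {b c : ℤ} (hbc : b < c - 1)
    (hc : f (c - 1) = true) : tally f b c = tally f b (c - 1) + 1 := by
  have hIoo : Finset.Ioo b c = insert (c - 1) (Finset.Ioo b (c - 1)) := by
    ext x; simp only [Finset.mem_Ioo, Finset.mem_insert]; omega
  have hnot : c - 1 ∉ (Finset.Ioo b (c - 1)).filter fun x => f x = true := by simp
  unfold tally
  rw [hIoo, Finset.filter_insert, Finset.filter_insert, if_pos hc, if_neg (by simp [hc]),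
    Finset.card_insert_of_notMem hnot]
  push_cast
  ring

lemma IsLegal.lt_sub_one {f : F} {a b : ℤ} (hl : IsLegal f a b) (h : f (a - 1) = true) :
    b < a - 1 := by
  obtain ⟨hba, -, hfb, -⟩ := hl
  have : b ≠ a - 1 := by rintro rfl; simp [h] at hfb
  omega

lemma tally_eq_tally_update_sub_one_add_one {f : F} {a b : ℤ} (h : f (a - 1) = true)
    (hb : b < a - 1) : tally f b a = tally (Function.update f a false) b (a - 1) + 1 := by
  rw [tally_update_of_le f false b (by omega), tally_eq_tally_sub_one_add_one hb h]

lemma isLegal_iff_isLegal_update_sub_one {f : F} {a b : ℤ} (ha : f a = true)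
    (h : f (a - 1) = true) :
    IsLegal f a b ↔ IsLegal (Function.update f a false) (a - 1) b := by
  constructor
  · intro hl
    have hb := hl.lt_sub_one h
    obtain ⟨-, -, hfb, htally⟩ := hl
    refine ⟨hb, ?_, ?_, fun c hbc hca => ?_⟩
    · rwa [Function.update_of_ne (by omega)]
    · rwa [Function.update_of_ne (by omega)]
    · rw [tally_update_of_le f false b (by omega)]
      exact htally c hbc (by omega)
  · rintro ⟨hb, -, hfb, htally⟩
    rw [Function.update_of_ne (by omega)] at hfb
    refine ⟨by omega, ha, hfb, fun c hbc hca => ?_⟩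
    rcases hca.lt_or_eq with hca | rfl
    · rw [← tally_update_of_le f false b hca.le]
      exact htally c hbc (by omega)
    · rw [tally_eq_tally_update_sub_one_add_one h hb]
      linarith [htally (c - 1) hb le_rfl]

theorem stmt7_general (f : F) (a : ℤ)
    (hx : f a = true) (hx' : f (a - 1) = true) :
    (∀ b : ℤ, IsLegal f a b → tally f b a ≠ 0) ∧
    (∀ i : ℤ, 0 < i →
      {b : ℤ | IsLegal f a b ∧ tally f b a = i} =
        {b : ℤ | IsLegal (Function.update f a false) (a - 1) b ∧
          tally (Function.update f a false) b (a - 1) = i - 1}) := by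
  have weight : ∀ b, IsLegal f a b →
      tally f b a = tally (Function.update f a false) b (a - 1) + 1 :=
    fun b hl => tally_eq_tally_update_sub_one_add_one hx' (hl.lt_sub_one hx')
  refine ⟨fun b hl => ?_, fun i _ => ?_⟩
  · obtain ⟨hb, -, -, hnonneg⟩ := (isLegal_iff_isLegal_update_sub_one hx hx').1 hl
    have := hnonneg (a - 1) hb le_rfl
    rw [weight b hl]
    omega
  · ext b
    simp only [Set.mem_ofPred_eq, ← isLegal_iff_isLegal_update_sub_one hx hx']
    exact and_congr_right fun hl => by rw [weight b hl]; omega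

/-- suppose `f(a) = ×` and `f(a−1) = ×`, and let `h = f^a` be `f` with the
`×` at `a` deleted.  Then there is no weight-zero legal move from `f` starting at `a`,
and for `i > 0` the ends of legal moves of weight `i` from `f` starting at `a` are
exactly the ends of legal moves of weight `i−1` from `h` starting at `a−1`. -/
theorem stmt7 (f : F) (hf : {x : ℤ | f x = true}.Finite) (a : ℤ)
    (hx : f a = true) (hx' : f (a - 1) = true) :
    (∀ b : ℤ, IsLegal f a b → tally f b a ≠ 0) ∧
    (∀ i : ℤ, 0 < i →
      {b : ℤ | IsLegal f a b ∧ tally f b a = i} =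
        {b : ℤ | IsLegal (Function.update f a false) (a - 1) b ∧
          tally (Function.update f a false) b (a - 1) = i - 1}) :=
  stmt7_general f a hx hx'

end KacComb
end

section
/- For f ∈ F with finitely many ×'s, define |f| to be the sum of the elements of f⁻¹(×). If g is obtained from f by a legal move of weight zero, then |f| − |g| is odd. -/
/-! The move trades the `×` at `a` for one at `b`, so `|f| − |g| = a − b`. Weight zero says the
`a − b − 1` positions strictly between `b` and `a` are half `×`'s and half `∘`'s, so `a − b − 1`
is even. -/

namespace KacComb

theorem tally_eq_card_sub (f : F) (b c : ℤ) :
    tally f b c = ((Finset.Ioo b c).card : ℤ) -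
      2 * (((Finset.Ioo b c).filter fun x => f x = false).card : ℤ) := by
  have hsplit := Finset.card_filter_add_card_filter_not (s := Finset.Ioo b c) (fun x => f x = true)
  simp only [Bool.not_eq_true] at hsplit
  unfold tally
  omega

theorem odd_sub_of_tally_eq_zero {f : F} {b c : ℤ} (hbc : b < c) (h : tally f b c = 0) :
    Odd (c - b) := by
  rw [tally_eq_card_sub, Int.card_Ioo] at h
  exact ⟨((Finset.Ioo b c).filter fun x => f x = false).card, by omega⟩

theorem setOf_move_eq {f : F} {a b : ℤ} (hab : a ≠ b) :
    {x | move f a b x = true} = insert b ({x | f x = true} \ {a}) := by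
  ext x
  by_cases hxb : x = b
  · simp [move, hxb]
  · by_cases hxa : x = a <;> simp [move, hxa, hxb, hab]

theorem sum_toFinset_move {f : F} {a b : ℤ} (hfa : f a = true) (hfb : f b = false)
    (hf : {x : ℤ | f x = true}.Finite) (hg : {x : ℤ | move f a b x = true}.Finite) :
    ∑ x ∈ hg.toFinset, x = (∑ x ∈ hf.toFinset, x) - a + b := by
  have hab : a ≠ b := by rintro rfl; simp_all
  have hset : hg.toFinset = insert b (hf.toFinset.erase a) := by
    ext x
    simp [setOf_move_eq hab, and_comm]
  have hb : b ∉ hf.toFinset.erase a := by simp [hfb]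
  rw [hset, Finset.sum_insert hb, Finset.sum_erase_eq_sub (by simpa using hfa)]
  ring

/-- if `g` is obtained from `f` by a legal move of weight zero, then
`|f| − |g|` is odd, where `|f|` is the sum of the positions of the `×`'s of `f`. -/
theorem stmt9 (f g : F) (hf : {x : ℤ | f x = true}.Finite)
    (hg : {x : ℤ | g x = true}.Finite) (a b : ℤ)
    (h : LegalMove f g a b) (hw : tally f b a = 0) :
    Odd ((∑ x ∈ hf.toFinset, x) - (∑ x ∈ hg.toFinset, x)) := by
  obtain ⟨⟨hba, hfa, hfb, -⟩, rfl⟩ := h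
  rw [sum_toFinset_move hfa hfb hf hg]
  convert odd_sub_of_tally_eq_zero hba hw using 1
  ring

end KacComb
end
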